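/- Let X be a non-discrete metrizable topological space. Then the set of all d ∈ Met(X) such that the metric space (X, d) is not uniformly disconnected is a dense G_δ subset of Met(X). -/

import Mathlib

/-!
For a fixed finite chain, "every step is shorter than `δ` times the distance between the
endpoints" is a finite family of strict inequalities between distances, each continuous in the
metric for `D_X`. Failure of uniform disconnectedness asks for such a chain for every
`δ = 1/(n+1)`, so the set is a countable intersection of open sets.

For density, fix `d`, `c > 0` and a non-isolated point `p`. Choose `y k → p` with
`d(y k, p) < c/(k+1)^3` and halving distances to `p`, and a continuous `g : X → [0, c]` with
`g (y k) = c/(k+1)^2`: a truncated sum of tents centred at the `y k`, each vanishing at the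
other centres. The metric `max d |g x - g y|` is compatible and `c`-close to `d`, and
`y N, …, y (2N+1)` is a chain with steps `O(c/N^3)` and endpoints `3c/(4(N+1)^2)` apart.
-/

open scoped ENNReal

/-- The distance function of a bundled metric-space structure. -/
noncomputable def mdist {X : Type*} (m : MetricSpace X) (x y : X) : ℝ :=
  m.toDist.dist x y

/-- `Met(X)`: the set of metrics (bundled metric-space structures) on `X` that induce
the given topology of `X`. -/
def MetricsOn (X : Type*) [t : TopologicalSpace X] : Set (MetricSpace X) :=
  { m | m.toUniformSpace.toTopologicalSpace = t }

/-- The extended sup-metric `D_X` on metrics on `X`. -/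
noncomputable def metD {X : Type*} (d e : MetricSpace X) : ℝ≥0∞ :=
  ⨆ p : X × X, ENNReal.ofReal |mdist d p.1 p.2 - mdist e p.1 p.2|

/-- The space `Met(X)` of metrics on `X` compatible with its topology. -/
def Met (X : Type*) [TopologicalSpace X] : Type _ :=
  { m : MetricSpace X // m ∈ MetricsOn X }

/-- The topology on `Met(X)` generated by the extended metric `D_X`, i.e. generated by the
open balls of `D_X`. -/
instance Met.topologicalSpace (X : Type*) [TopologicalSpace X] : TopologicalSpace (Met X) :=
  TopologicalSpace.generateFrom
    { U | ∃ (d : Met X) (ε : ℝ≥0∞), 0 < ε ∧ U = { e : Met X | metD d.1 e.1 < ε } }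

/-- A metric space is uniformly disconnected if there is `δ ∈ (0,1)` such that any finite
sequence `z_0, …, z_N` with `d(z_i, z_{i+1}) < δ · d(z_0, z_N)` for all `i` has exactly one
term (`N = 0`). -/
def IsUniformlyDisconnected {X : Type*} (m : MetricSpace X) : Prop :=
  ∃ δ : ℝ, 0 < δ ∧ δ < 1 ∧ ∀ (N : ℕ) (z : Fin (N + 1) → X),
    (∀ i : Fin N, mdist m (z i.castSucc) (z i.succ) < δ * mdist m (z 0) (z (Fin.last N))) →
    N = 0


section

open Filter Topology Metric Set

variable {X : Type*}

theorem mdist_nonneg (m : MetricSpace X) (x y : X) : 0 ≤ mdist m x y :=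
  @dist_nonneg X m.toPseudoMetricSpace x y

def HasDeltaChain (D : X → X → ℝ) (δ : ℝ) : Prop :=
  ∃ (N : ℕ) (z : Fin (N + 1) → X), N ≠ 0 ∧
    ∀ i : Fin N, D (z i.castSucc) (z i.succ) < δ * D (z 0) (z (Fin.last N))

theorem HasDeltaChain.mono {D : X → X → ℝ} {δ δ' : ℝ} (h : HasDeltaChain D δ) (hδ : δ ≤ δ')
    (hD : ∀ x y, 0 ≤ D x y) : HasDeltaChain D δ' := by
  obtain ⟨N, z, hN, hz⟩ := h
  exact ⟨N, z, hN, fun i => (hz i).trans_le (mul_le_mul_of_nonneg_right hδ (hD _ _))⟩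

theorem not_isUniformlyDisconnected_iff (m : MetricSpace X) :
    ¬IsUniformlyDisconnected m ↔ ∀ δ > 0, HasDeltaChain (mdist m) δ := by
  constructor
  · intro h δ hδ
    simp only [IsUniformlyDisconnected, not_exists, not_and, not_forall] at h
    obtain ⟨N, z, hz, hN⟩ := h (min δ (1 / 2)) (by positivity) (by
      linarith [min_le_right δ (1 / 2)])
    exact HasDeltaChain.mono ⟨N, z, hN, hz⟩ (min_le_left _ _) (mdist_nonneg m)
  · rintro h ⟨δ, hδ, -, H⟩
    obtain ⟨N, z, hN, hz⟩ := h δ hδ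
    exact hN (H N z hz)

theorem metD_self (d : MetricSpace X) : metD d d = 0 := by
  simp [metD]

theorem metD_triangle (a b c : MetricSpace X) : metD a c ≤ metD a b + metD b c := by
  refine iSup_le fun w => ?_
  calc ENNReal.ofReal |mdist a w.1 w.2 - mdist c w.1 w.2|
      ≤ ENNReal.ofReal (|mdist a w.1 w.2 - mdist b w.1 w.2|
          + |mdist b w.1 w.2 - mdist c w.1 w.2|) :=
        ENNReal.ofReal_le_ofReal (abs_sub_le _ _ _)
    _ ≤ ENNReal.ofReal |mdist a w.1 w.2 - mdist b w.1 w.2|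
          + ENNReal.ofReal |mdist b w.1 w.2 - mdist c w.1 w.2| := ENNReal.ofReal_add_le
    _ ≤ metD a b + metD b c := add_le_add
        (le_iSup (fun p : X × X => ENNReal.ofReal |mdist a p.1 p.2 - mdist b p.1 p.2|) w)
        (le_iSup (fun p : X × X => ENNReal.ofReal |mdist b p.1 p.2 - mdist c p.1 p.2|) w)

theorem abs_mdist_sub_lt_of_metD_lt {d e : MetricSpace X} {ε : ℝ}
    (h : metD d e < ENNReal.ofReal ε) (x y : X) : |mdist d x y - mdist e x y| < ε := by
  have hle : ENNReal.ofReal |mdist d x y - mdist e x y| ≤ metD d e :=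
    le_iSup (fun p : X × X => ENNReal.ofReal |mdist d p.1 p.2 - mdist e p.1 p.2|) (x, y)
  exact (ENNReal.ofReal_lt_ofReal_iff'.1 (hle.trans_lt h)).1

theorem metD_le_ofReal {d e : MetricSpace X} {c : ℝ}
    (h : ∀ x y, |mdist d x y - mdist e x y| ≤ c) : metD d e ≤ ENNReal.ofReal c :=
  iSup_le fun w => ENNReal.ofReal_le_ofReal (h w.1 w.2)

namespace Met

variable [TopologicalSpace X]

theorem isOpen_ball (d : Met X) {ε : ℝ≥0∞} (hε : 0 < ε) :
    IsOpen {e : Met X | metD d.1 e.1 < ε} :=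
  TopologicalSpace.isOpen_generateFrom_of_mem ⟨d, ε, hε, rfl⟩

theorem exists_ball_subset {U : Set (Met X)} (hU : IsOpen U) {d : Met X} (hd : d ∈ U) :
    ∃ ε > 0, {e : Met X | metD d.1 e.1 < ε} ⊆ U := by
  induction hU generalizing d with
  | basic s hs =>
    obtain ⟨d₀, ε₀, -, rfl⟩ := hs
    refine ⟨ε₀ - metD d₀.1 d.1, tsub_pos_of_lt hd, fun e he => ?_⟩
    calc metD d₀.1 e.1 ≤ metD d₀.1 d.1 + metD d.1 e.1 := metD_triangle _ _ _
      _ < metD d₀.1 d.1 + (ε₀ - metD d₀.1 d.1) := ENNReal.add_lt_add_left hd.ne_top he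
      _ = ε₀ := add_tsub_cancel_of_le hd.le
  | univ => exact ⟨1, one_pos, subset_univ _⟩
  | inter s t _ _ hs ht =>
    obtain ⟨ε₁, hε₁, h₁⟩ := hs hd.1
    obtain ⟨ε₂, hε₂, h₂⟩ := ht hd.2
    exact ⟨min ε₁ ε₂, lt_min hε₁ hε₂, fun e (he : metD d.1 e.1 < min ε₁ ε₂) =>
      ⟨h₁ (lt_min_iff.1 he).1, h₂ (lt_min_iff.1 he).2⟩⟩
  | sUnion S _ hS =>
    obtain ⟨s, hsS, hds⟩ := hd
    obtain ⟨ε, hε, h⟩ := hS s hsS hds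
    exact ⟨ε, hε, h.trans (subset_sUnion_of_mem hsS)⟩

theorem continuous_mdist (x y : X) : Continuous fun d : Met X => mdist d.1 x y := by
  refine continuous_iff_continuousAt.2 fun d => Metric.tendsto_nhds.2 fun ε hε => ?_
  filter_upwards [(isOpen_ball d (ENNReal.ofReal_pos.2 hε)).mem_nhds
    (by simpa [metD_self] using hε)] with e he
  rw [Real.dist_eq, abs_sub_comm]
  exact abs_mdist_sub_lt_of_metD_lt he x y

end Met

theorem isOpen_setOf_hasDeltaChain [TopologicalSpace X] (δ : ℝ) :
    IsOpen {d : Met X | HasDeltaChain (mdist d.1) δ} := by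
  have h : {d : Met X | HasDeltaChain (mdist d.1) δ}
      = ⋃ (N : ℕ) (z : Fin (N + 1) → X) (_ : N ≠ 0),
        ⋂ i : Fin N, {d : Met X | mdist d.1 (z i.castSucc) (z i.succ)
        < δ * mdist d.1 (z 0) (z (Fin.last N))} := by
    ext d
    simp [HasDeltaChain]
  rw [h]
  refine isOpen_iUnion fun N => isOpen_iUnion fun z => isOpen_iUnion fun _ => ?_
  exact isOpen_iInter_of_finite fun i =>
    isOpen_lt (Met.continuous_mdist _ _) (continuous_const.mul (Met.continuous_mdist _ _))

theorem isGδ_setOf_not_isUniformlyDisconnected [TopologicalSpace X] :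
    IsGδ {d : Met X | ¬IsUniformlyDisconnected d.1} := by
  have h : {d : Met X | ¬IsUniformlyDisconnected d.1}
      = ⋂ n : ℕ, {d | HasDeltaChain (mdist d.1) (1 / (n + 1))} := by
    ext d
    simp only [mem_ofPred_eq, mem_iInter, not_isUniformlyDisconnected_iff]
    refine ⟨fun h n => h _ Nat.one_div_pos_of_nat, fun h δ hδ => ?_⟩
    obtain ⟨n, hn⟩ := exists_nat_one_div_lt hδ
    exact (h n).mono hn.le (mdist_nonneg _)
  rw [h]
  exact .iInter fun n => (isOpen_setOf_hasDeltaChain _).isGδ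

theorem abs_div_sq_sub_div_succ_sq_le {c t : ℝ} (hc : 0 ≤ c) (ht : 0 < t) :
    |c / t ^ 2 - c / (t + 1) ^ 2| ≤ 2 * c / t ^ 3 := by
  rw [abs_of_nonneg (sub_nonneg.2 (div_le_div_of_nonneg_left hc (by positivity)
      (by gcongr; linarith))),
    div_sub_div _ _ (by positivity) (by positivity),
    div_le_div_iff₀ (by positivity) (by positivity)]
  nlinarith [mul_nonneg hc (pow_pos ht 2).le, mul_nonneg hc (pow_pos ht 3).le]

section Construction

variable [MetricSpace X]

theorem exists_seq_dist_lt_of_neBot {p : X} (hp : (𝓝[≠] p).NeBot) {b : ℕ → ℝ}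
    (hb : ∀ k, 0 < b k) : ∃ y : ℕ → X, ∀ k, 0 < dist (y k) p ∧ dist (y k) p < b k ∧
      dist (y (k + 1)) p ≤ dist (y k) p / 2 := by
  have hpick : ∀ ε > 0, ∃ x, 0 < dist x p ∧ dist x p < ε := fun ε hε => by
    obtain ⟨x, hxε, hxp⟩ := nhdsWithin_basis_ball.neBot_iff.1 hp hε
    exact ⟨x, dist_pos.2 hxp, hxε⟩
  have : Nonempty X := ⟨p⟩
  choose! pick hpos hlt using hpick
  let y : ℕ → X := fun k =>
    Nat.rec (pick (b 0)) (fun k x => pick (min (b (k + 1)) (dist x p / 2))) k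
  have hy : ∀ k, 0 < dist (y k) p ∧ dist (y k) p < b k := by
    intro k
    induction k with
    | zero => exact ⟨hpos _ (hb 0), hlt _ (hb 0)⟩
    | succ k ih =>
      have h : 0 < min (b (k + 1)) (dist (y k) p / 2) := lt_min (hb _) (half_pos ih.1)
      exact ⟨hpos _ h, (hlt _ h).trans_le (min_le_left _ _)⟩
  refine ⟨y, fun k => ⟨(hy k).1, (hy k).2, ?_⟩⟩
  have h : 0 < min (b (k + 1)) (dist (y k) p / 2) := lt_min (hb _) (half_pos (hy k).1)
  exact (hlt _ h).le.trans (min_le_right _ _)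

theorem le_half_of_lt_of_forall_succ_le_half {r : ℕ → ℝ} (hr0 : ∀ k, 0 ≤ r k)
    (hr : ∀ k, r (k + 1) ≤ r k / 2) {j k : ℕ} (hjk : j < k) : r k ≤ r j / 2 := by
  induction k, hjk using Nat.le_induction with
  | base => exact hr j
  | succ k _ ih => linarith [hr k, hr0 k]

theorem dist_le_two_mul_dist_of_halving {p : X} {y : ℕ → X}
    (hy : ∀ k, dist (y (k + 1)) p ≤ dist (y k) p / 2) {j k : ℕ} (hjk : j ≠ k) :
    dist (y k) p ≤ 2 * dist (y j) (y k) := by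
  have hhalf {i l : ℕ} (h : i < l) : dist (y l) p ≤ dist (y i) p / 2 :=
    le_half_of_lt_of_forall_succ_le_half (r := fun k => dist (y k) p) (fun _ => dist_nonneg) hy h
  obtain ⟨htri₁, htri₂⟩ := abs_le.1 (abs_dist_sub_le (y j) (y k) p)
  rcases hjk.lt_or_gt with h | h <;> linarith [hhalf h]

noncomputable def tentSum (a ρ : ℕ → ℝ) (y : ℕ → X) (x : X) : ℝ :=
  ∑' k, a k * max 0 (1 - dist x (y k) / ρ k)

section tentSum

variable {a ρ : ℕ → ℝ} {y : ℕ → X}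

theorem tent_mem_Icc (hρ : ∀ k, 0 < ρ k) (k : ℕ) (x : X) :
    max 0 (1 - dist x (y k) / ρ k) ∈ Icc 0 1 :=
  ⟨le_max_left _ _, max_le zero_le_one
    (by linarith [div_nonneg (dist_nonneg (x := x) (y := y k)) (hρ k).le])⟩

theorem continuous_tentSum (hρ : ∀ k, 0 < ρ k) (ha0 : ∀ k, 0 ≤ a k) (ha : Summable a) :
    Continuous (tentSum a ρ y) := by
  refine continuous_tsum (fun k => by fun_prop) ha fun k x => ?_
  have h := tent_mem_Icc (y := y) hρ k x
  rw [Real.norm_eq_abs, abs_of_nonneg (mul_nonneg (ha0 k) h.1)]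
  exact mul_le_of_le_one_right (ha0 k) h.2

theorem tentSum_nonneg (hρ : ∀ k, 0 < ρ k) (ha0 : ∀ k, 0 ≤ a k) (x : X) :
    0 ≤ tentSum a ρ y x :=
  tsum_nonneg fun k => mul_nonneg (ha0 k) (tent_mem_Icc hρ k x).1

theorem tentSum_apply_center (hρ : ∀ k, 0 < ρ k)
    (hsep : ∀ j k, j ≠ k → ρ k ≤ dist (y j) (y k)) (j : ℕ) : tentSum a ρ y (y j) = a j := by
  rw [tentSum, tsum_eq_single j]
  · simp
  · intro k hk
    have h : 1 ≤ dist (y j) (y k) / ρ k := (one_le_div (hρ k)).2 (hsep j k (Ne.symm hk))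
    rw [max_eq_left (by linarith), mul_zero]

end tentSum

theorem hasDeltaChain_max_of_staircase {g : X → ℝ} {y : ℕ → X} {c δ : ℝ} (hc : 0 < c)
    (hδ : 0 < δ) (hy : ∀ k, dist (y k) (y (k + 1)) ≤ 2 * c / ((k : ℝ) + 1) ^ 3)
    (hg : ∀ k, g (y k) = c / ((k : ℝ) + 1) ^ 2) :
    HasDeltaChain (fun x x' => max (dist x x') |g x - g x'|) δ := by
  obtain ⟨N, hN⟩ := exists_nat_gt (3 / δ)
  set s : ℝ := (N : ℝ) + 1 with hs
  have hs0 : 0 < s := by positivity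
  have hstep : ∀ j, N ≤ j →
      max (dist (y j) (y (j + 1))) |g (y j) - g (y (j + 1))| ≤ 2 * c / s ^ 3 := by
    intro j hj
    have hsj : s ≤ (j : ℝ) + 1 := by rw [hs]; exact_mod_cast Nat.succ_le_succ hj
    have hbound : 2 * c / ((j : ℝ) + 1) ^ 3 ≤ 2 * c / s ^ 3 := by gcongr
    refine max_le ((hy j).trans hbound) (le_trans ?_ hbound)
    rw [hg, hg, Nat.cast_succ]
    exact abs_div_sq_sub_div_succ_sq_le hc.le (by positivity)
  have hend : 3 * c / (4 * s ^ 2) ≤ max (dist (y N) (y (N + (N + 1))))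
      |g (y N) - g (y (N + (N + 1)))| := by
    refine le_max_of_le_right (le_of_eq ?_)
    rw [hg, hg, abs_of_nonneg (sub_nonneg.2 (div_le_div_of_nonneg_left hc.le (by positivity)
      (by gcongr; linarith)))]
    rw [hs]
    push_cast
    field_simp
    ring
  refine ⟨N + 1, fun i => y (N + i), N.succ_ne_zero, fun i => ?_⟩
  calc _ ≤ 2 * c / s ^ 3 := hstep (N + i) (Nat.le_add_right _ _)
    _ < δ * (3 * c / (4 * s ^ 2)) := by
      rw [div_lt_iff₀ (by positivity)]
      have : 3 < δ * s := by rw [div_lt_iff₀ hδ] at hN; nlinarith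
      field_simp
      nlinarith [pow_pos hs0 2, pow_pos hs0 3]
    _ ≤ _ := mul_le_mul_of_nonneg_left hend hδ.le

theorem exists_continuous_hasDeltaChain_max {p : X} (hp : (𝓝[≠] p).NeBot) {c : ℝ}
    (hc : 0 < c) :
    ∃ g : X → ℝ, Continuous g ∧ (∀ x, g x ∈ Icc 0 c) ∧
      ∀ δ > 0, HasDeltaChain (fun x x' => max (dist x x') |g x - g x'|) δ := by
  obtain ⟨y, hy⟩ := exists_seq_dist_lt_of_neBot hp (b := fun k => c / ((k : ℝ) + 1) ^ 3)
    (fun k => by positivity)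
  set a : ℕ → ℝ := fun k => c / ((k : ℝ) + 1) ^ 2 with ha_def
  have ha0 : ∀ k, 0 ≤ a k := fun k => by positivity
  have ha : Summable a := by
    have := ((summable_nat_add_iff 1).2 (Real.summable_one_div_nat_pow.2 one_lt_two)).mul_left c
    simpa [ha_def, div_eq_mul_inv] using this
  have hρ : ∀ k, 0 < dist (y k) p / 2 := fun k => half_pos (hy k).1
  have hsep : ∀ j k, j ≠ k → dist (y k) p / 2 ≤ dist (y j) (y k) := fun j k hjk => by
    linarith [dist_le_two_mul_dist_of_halving (fun k => (hy k).2.2) hjk]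
  let g : X → ℝ := fun x => min c (tentSum a (fun k => dist (y k) p / 2) y x)
  have hg : ∀ k, g (y k) = a k := fun k => by
    simp only [g, tentSum_apply_center hρ hsep k]
    refine min_eq_right ?_
    exact div_le_self hc.le (one_le_pow₀ (by linarith [k.cast_nonneg (α := ℝ)]))
  refine ⟨g, continuous_const.min (continuous_tentSum hρ ha0 ha),
    fun x => ⟨le_min hc.le (tentSum_nonneg hρ ha0 x), min_le_left _ _⟩,
    fun δ hδ => hasDeltaChain_max_of_staircase hc hδ (fun k => ?_) hg⟩
  calc dist (y k) (y (k + 1)) ≤ dist (y k) p + dist (y (k + 1)) p := dist_triangle_right _ _ _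
    _ ≤ 2 * c / ((k : ℝ) + 1) ^ 3 := by
      rw [mul_div_assoc]
      linarith [(hy k).1, (hy k).2.1, (hy k).2.2]

end Construction

theorem exists_mem_metricsOn_mdist_eq_max [t : TopologicalSpace X] {m : MetricSpace X}
    (hm : m ∈ MetricsOn X) {g : X → ℝ} (hg : Continuous g) :
    ∃ e ∈ MetricsOn X, ∀ x y, mdist e x y = max (mdist m x y) |g x - g y| := by
  obtain rfl : m.toUniformSpace.toTopologicalSpace = t := hm
  let _ := m
  refine ⟨(isEmbedding_graph hg).comapMetricSpace _, rfl, fun x y => ?_⟩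
  show dist (x, g x) (y, g y) = _
  rw [Prod.dist_eq, Real.dist_eq]
  rfl

theorem exists_mem_metricsOn_near_not_isUniformlyDisconnected [t : TopologicalSpace X]
    {m : MetricSpace X} (hm : m ∈ MetricsOn X) {p : X} (hp : (𝓝[≠] p).NeBot) {c : ℝ}
    (hc : 0 < c) : ∃ e ∈ MetricsOn X,
      (∀ x y, |mdist m x y - mdist e x y| ≤ c) ∧ ¬IsUniformlyDisconnected e := by
  obtain ⟨g, hg, hgc, hchain⟩ : ∃ g : X → ℝ, Continuous g ∧ (∀ x, g x ∈ Icc 0 c) ∧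
      ∀ δ > 0, HasDeltaChain (fun x x' => max (mdist m x x') |g x - g x'|) δ := by
    obtain rfl : m.toUniformSpace.toTopologicalSpace = t := hm
    let _ := m
    exact exists_continuous_hasDeltaChain_max hp hc
  obtain ⟨e, he, hed⟩ := exists_mem_metricsOn_mdist_eq_max hm hg
  refine ⟨e, he, fun x y => ?_, ?_⟩
  · have hgxy : |g x - g y| ≤ c := abs_sub_le_iff.2
      ⟨by linarith [(hgc x).2, (hgc y).1], by linarith [(hgc x).1, (hgc y).2]⟩
    rw [hed, abs_sub_comm, abs_of_nonneg (sub_nonneg.2 (le_max_left _ _)), sub_le_iff_le_add]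
    exact max_le (by linarith [hc]) (by linarith [mdist_nonneg m x y])
  · rw [not_isUniformlyDisconnected_iff, funext₂ hed]
    exact hchain

theorem dense_setOf_not_isUniformlyDisconnected [TopologicalSpace X] (hX : ¬DiscreteTopology X) :
    Dense {d : Met X | ¬IsUniformlyDisconnected d.1} := by
  obtain ⟨p, hp⟩ : ∃ p : X, (𝓝[≠] p).NeBot := by
    simpa [discreteTopology_iff_nhds_ne, ← neBot_iff] using hX
  refine dense_iff_inter_open.2 fun U hU ⟨d, hd⟩ => ?_
  obtain ⟨ε, hε, hball⟩ := Met.exists_ball_subset hU hd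
  obtain ⟨c, -, hc, hcε⟩ := ENNReal.lt_iff_exists_real_btwn.1 hε
  obtain ⟨e, he, hde, hnot⟩ :=
    exists_mem_metricsOn_near_not_isUniformlyDisconnected d.2 hp (ENNReal.ofReal_pos.1 hc)
  exact ⟨⟨e, he⟩, hball ((metD_le_ofReal hde).trans_lt hcε), hnot⟩

end

theorem non_uniformly_disconnected_dense_Gdelta_general (X : Type*) [TopologicalSpace X]
    (hX : ¬DiscreteTopology X) :
    Dense { d : Met X | ¬IsUniformlyDisconnected d.1 } ∧
    IsGδ { d : Met X | ¬IsUniformlyDisconnected d.1 } :=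
  ⟨dense_setOf_not_isUniformlyDisconnected hX, isGδ_setOf_not_isUniformlyDisconnected⟩

theorem non_uniformly_disconnected_dense_Gdelta (X : Type*) [TopologicalSpace X]
    [TopologicalSpace.MetrizableSpace X] (hX : ¬DiscreteTopology X) :
    Dense { d : Met X | ¬IsUniformlyDisconnected d.1 } ∧
    IsGδ { d : Met X | ¬IsUniformlyDisconnected d.1 } :=
  non_uniformly_disconnected_dense_Gdelta_general X hX
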